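/- Suppose α_0, …, α_ι > 0 and that P satisfies the coordinate-distribution assumption and has finite moments of all orders. Let Λ be the invertible N×N change-of-basis matrix with Φ(x) = Λᵀ Ψ(x) for all x. Then there is a constant C(ι) depending only on ι, P, and α_0,…,α_ι — in particular independent of the dimension d — such that ‖Λ‖_op ≤ C(ι) and ‖Λ^{−1}‖_op ≤ C(ι), where ‖·‖_op denotes the ℓ₂→ℓ₂ operator norm. -/

import Mathlib

/-!
Writing `t ^ k = ∑ j, c k j * q j t` with `c` the inverse of `B k j = (q k).coeff j`, the
monomial features expand over the orthonormal ones coordinate by coordinate, so (the monomials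
being linearly independent) `Λ s r = (w r / w s) * ∏ i, c (r i) (s i) * d ^ ((s i - r i) / 2)`,
where `w` are the weights of the feature maps; likewise `Λ⁻¹` with `B` in place of `c`.
Since `q 0 = 1` and, `P` being centered, `q 1` has no constant term, both `B` and `c` are lower
triangular with entries `1` at `(0, 0)` and `0` at `(1, 0)`. Schur's test bounds the operator norm
by the largest ℓ¹ norm of a row or a column, and these factor over the coordinates. A coordinate
with `s i = 0` contributes `1 + O(1 / d)` to a row sum, because the entry at `(1, 0)` vanishes and
the degrees `≥ 2` are damped by `1 / d`; the at most `d` such coordinates together contribute at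
most `(1 + M / d) ^ d ≤ exp M`, and the at most `ι` others a constant each.
-/

open MeasureTheory

/-- The finite set of multi-indices `r : Fin d → ℕ` with `Σ_i r_i ≤ ι`, encoded with
coordinates in `Fin (ι+1)`. -/
abbrev MIdx (d ι : ℕ) := {r : Fin d → Fin (ι + 1) // ∑ i, (r i : ℕ) ≤ ι}

/-- Total degree `|r|` of a multi-index. -/
def degIdx (d ι : ℕ) (r : MIdx d ι) : ℕ := ∑ i, (r.1 i : ℕ)

/-- The multinomial coefficient `c_r = |r|! / (r_1! ⋯ r_d!)`, as a real number. -/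
noncomputable def multinom (d ι : ℕ) (r : MIdx d ι) : ℝ :=
  (Nat.factorial (degIdx d ι r) : ℝ) / ∏ i, (Nat.factorial (r.1 i : ℕ) : ℝ)

/-- The monomial feature map `Φ_r(x) = (c_r α_{|r|})^{1/2} p_r(x) / d^{|r|/2}`. -/
noncomputable def Phi (d ι : ℕ) (a : ℕ → ℝ) (x : Fin d → ℝ) (r : MIdx d ι) : ℝ :=
  Real.sqrt (multinom d ι r * a (degIdx d ι r)) * (∏ i, x i ^ (r.1 i : ℕ)) /
    (d : ℝ) ^ ((degIdx d ι r : ℝ) / 2)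

/-- The orthonormal-polynomial feature map `Ψ_r(x) = (c_r α_{|r|})^{1/2} q_r(x) / d^{|r|/2}`. -/
noncomputable def Psi (d ι : ℕ) (q : ℕ → Polynomial ℝ) (a : ℕ → ℝ) (x : Fin d → ℝ)
    (r : MIdx d ι) : ℝ :=
  Real.sqrt (multinom d ι r * a (degIdx d ι r)) * (∏ i, (q (r.1 i : ℕ)).eval (x i)) /
    (d : ℝ) ^ ((degIdx d ι r : ℝ) / 2)

open Finset Matrix

lemma one_le_multinom {d ι : ℕ} (r : MIdx d ι) : 1 ≤ multinom d ι r := by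
  have hpos : (0 : ℝ) < ∏ i, ((r.1 i : ℕ).factorial : ℝ) := by positivity
  rw [multinom, one_le_div hpos]
  exact_mod_cast Nat.le_of_dvd (Nat.factorial_pos _) (Nat.prod_factorial_dvd_factorial_sum _ _)

lemma multinom_le_factorial {d ι : ℕ} (r : MIdx d ι) : multinom d ι r ≤ ι.factorial := by
  refine (div_le_self (by positivity) ?_).trans (by exact_mod_cast Nat.factorial_le r.2)
  exact_mod_cast Nat.one_le_iff_ne_zero.2 (prod_ne_zero_iff.2 fun i _ => Nat.factorial_ne_zero _)

noncomputable def featureWeight (d ι : ℕ) (a : ℕ → ℝ) (r : MIdx d ι) : ℝ :=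
  √(multinom d ι r * a (degIdx d ι r))

section Weight

variable {d ι : ℕ} {a : ℕ → ℝ}

lemma featureWeight_pos (ha : ∀ i ≤ ι, 0 < a i) (r : MIdx d ι) : 0 < featureWeight d ι a r :=
  Real.sqrt_pos.2 (mul_pos (zero_lt_one.trans_le (one_le_multinom r)) (ha _ r.2))

lemma featureWeight_div_le (ha : ∀ i ≤ ι, 0 < a i) (r s : MIdx d ι) :
    featureWeight d ι a r / featureWeight d ι a s ≤
      √(ι.factorial * (∑ i ∈ range (ι + 1), a i) * ∑ i ∈ range (ι + 1), (a i)⁻¹) := by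
  have hmem : ∀ t : MIdx d ι, degIdx d ι t ∈ range (ι + 1) := fun t => mem_range_succ_iff.2 t.2
  have ha' : ∀ i ∈ range (ι + 1), 0 < a i := fun i hi => ha i (mem_range_succ_iff.1 hi)
  have hsum : 0 ≤ ∑ i ∈ range (ι + 1), a i := sum_nonneg fun i hi => (ha' i hi).le
  have hmr := multinom_le_factorial r
  have hms := one_le_multinom s
  have hmr0 : 0 < multinom d ι r := zero_lt_one.trans_le (one_le_multinom r)
  have har := ha' _ (hmem r)
  have has := ha' _ (hmem s)
  rw [featureWeight, featureWeight, ← Real.sqrt_div' _ (by positivity)]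
  gcongr
  calc multinom d ι r * a (degIdx d ι r) / (multinom d ι s * a (degIdx d ι s))
      = multinom d ι r * a (degIdx d ι r) * (a (degIdx d ι s))⁻¹ * (multinom d ι s)⁻¹ := by
        field_simp
    _ ≤ multinom d ι r * a (degIdx d ι r) * (a (degIdx d ι s))⁻¹ :=
        mul_le_of_le_one_right (by positivity) (inv_le_one_of_one_le₀ hms)
    _ ≤ _ := by
        gcongr
        · exact single_le_sum (fun i hi => (ha' i hi).le) (hmem r)
        · exact single_le_sum (fun i hi => (inv_pos.2 (ha' i hi)).le) (hmem s)

end Weight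

noncomputable def feature (d ι : ℕ) (a : ℕ → ℝ) (f : Fin (ι + 1) → ℝ → ℝ) (x : Fin d → ℝ)
    (r : MIdx d ι) : ℝ :=
  featureWeight d ι a r * ∏ i, f (r.1 i) (x i) / √d ^ (r.1 i : ℕ)

noncomputable def tensorCoeffMatrix (d ι : ℕ) (a : ℕ → ℝ)
    (c : Matrix (Fin (ι + 1)) (Fin (ι + 1)) ℝ) : Matrix (MIdx d ι) (MIdx d ι) ℝ := fun s r =>
  featureWeight d ι a r / featureWeight d ι a s *
    ∏ i, c (r.1 i) (s.1 i) * (√d ^ (s.1 i : ℕ) / √d ^ (r.1 i : ℕ))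

section Feature

variable {d ι : ℕ} {a : ℕ → ℝ}

lemma rpow_degIdx_div_two (r : MIdx d ι) :
    (d : ℝ) ^ ((degIdx d ι r : ℝ) / 2) = ∏ i, √d ^ (r.1 i : ℕ) := by
  rw [Real.rpow_div_two_eq_sqrt _ d.cast_nonneg, Real.rpow_natCast, degIdx, prod_pow_eq_pow_sum]

lemma Phi_eq_feature (x : Fin d → ℝ) : Phi d ι a x = feature d ι a (fun k t => t ^ (k : ℕ)) x := by
  ext r
  rw [Phi, feature, rpow_degIdx_div_two, prod_div_distrib, mul_div_assoc, featureWeight]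

lemma Psi_eq_feature (q : ℕ → Polynomial ℝ) (x : Fin d → ℝ) :
    Psi d ι q a x = feature d ι a (fun k t => (q k).eval t) x := by
  ext r
  rw [Psi, feature, rpow_degIdx_div_two, prod_div_distrib, mul_div_assoc, featureWeight]

lemma sum_MIdx_eq_sum {M : Type*} [AddCommMonoid M] (F : (Fin d → Fin (ι + 1)) → M)
    (hF : ∀ s, ι < ∑ i, (s i : ℕ) → F s = 0) : ∑ s : MIdx d ι, F s.1 = ∑ s, F s := by
  classical
  rw [← sum_subtype (univ.filter fun s : Fin d → Fin (ι + 1) => ∑ i, (s i : ℕ) ≤ ι) (by simp) F]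
  exact sum_filter_of_ne fun s _ hs => not_lt.1 fun h => hs (hF s h)

lemma sum_MIdx_le_sum {F : (Fin d → Fin (ι + 1)) → ℝ} (hF : ∀ s, 0 ≤ F s) :
    ∑ s : MIdx d ι, F s.1 ≤ ∑ s, F s := by
  classical
  rw [← sum_subtype (univ.filter fun s : Fin d → Fin (ι + 1) => ∑ i, (s i : ℕ) ≤ ι) (by simp) F]
  exact sum_le_univ_sum_of_nonneg hF

lemma feature_eq_transpose_mulVec (hd : 0 < d) (ha : ∀ i ≤ ι, 0 < a i)
    {c : Matrix (Fin (ι + 1)) (Fin (ι + 1)) ℝ} (hc : c.IsLowerTriangular)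
    {f g : Fin (ι + 1) → ℝ → ℝ} (hfg : ∀ t, (fun k => f k t) = c *ᵥ fun j => g j t)
    (x : Fin d → ℝ) :
    feature d ι a f x = (tensorCoeffMatrix d ι a c)ᵀ *ᵥ feature d ι a g x := by
  ext r
  have hsqrt : √(d : ℝ) ≠ 0 := Real.sqrt_ne_zero'.2 (Nat.cast_pos.2 hd)
  have hw : ∀ s : MIdx d ι, featureWeight d ι a s ≠ 0 := fun s => (featureWeight_pos ha s).ne'
  have hexpand : ∏ i, f (r.1 i) (x i) / √d ^ (r.1 i : ℕ) =
      ∑ s : Fin d → Fin (ι + 1), ∏ i, c (r.1 i) (s i) * g (s i) (x i) / √d ^ (r.1 i : ℕ) := by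
    simp only [fun i => congrFun (hfg (x i)) (r.1 i), mulVec, dotProduct, sum_div]
    exact Fintype.prod_sum _
  have hvanish : ∀ s : Fin d → Fin (ι + 1), ι < ∑ i, (s i : ℕ) →
      ∏ i, c (r.1 i) (s i) * g (s i) (x i) / √d ^ (r.1 i : ℕ) = 0 := by
    intro s hs
    obtain ⟨i, -, hi⟩ := exists_lt_of_sum_lt (r.2.trans_lt hs)
    rw [prod_eq_zero (mem_univ i) (by rw [hc (OrderDual.toDual_lt_toDual.2 hi)]; ring)]
  rw [mulVec, dotProduct, feature, hexpand, ← sum_MIdx_eq_sum _ hvanish, mul_sum]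
  refine sum_congr rfl fun s _ => ?_
  rw [transpose_apply, tensorCoeffMatrix, feature]
  calc featureWeight d ι a r * ∏ i, c (r.1 i) (s.1 i) * g (s.1 i) (x i) / √d ^ (r.1 i : ℕ)
      = featureWeight d ι a r * ∏ i, (c (r.1 i) (s.1 i) * (√d ^ (s.1 i : ℕ) / √d ^ (r.1 i : ℕ))) *
          (g (s.1 i) (x i) / √d ^ (s.1 i : ℕ)) := by
        congr 1
        exact prod_congr rfl fun i _ => by field_simp
    _ = _ := by
        rw [prod_mul_distrib]
        field_simp [hw s]

end Feature

section Independence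

variable {d ι : ℕ} {a : ℕ → ℝ}

lemma eq_zero_of_sum_mul_prod_pow (v : MIdx d ι → ℝ)
    (hv : ∀ x : Fin d → ℝ, ∑ s, v s * ∏ i, x i ^ (s.1 i : ℕ) = 0) : v = 0 := by
  classical
  let e : MIdx d ι → Fin d →₀ ℕ := fun s => Finsupp.equivFunOnFinite.symm fun i => s.1 i
  have he : Function.Injective e := fun s t hst => Subtype.ext <| funext fun i =>
    Fin.ext (DFunLike.congr_fun hst i)
  let p : MvPolynomial (Fin d) ℝ := ∑ s, MvPolynomial.monomial (e s) (v s)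
  have hp : p = 0 := MvPolynomial.funext fun x => by
    simpa [p, e, MvPolynomial.eval_monomial, Finsupp.prod_fintype] using hv x
  ext s
  have := congrArg (MvPolynomial.coeff (e s)) hp
  simpa [p, MvPolynomial.coeff_sum, MvPolynomial.coeff_monomial, he.eq_iff] using this

lemma eq_of_transpose_mulVec_Phi_eq (hd : 0 < d) (ha : ∀ i ≤ ι, 0 < a i)
    {N N' : Matrix (MIdx d ι) (MIdx d ι) ℝ}
    (h : ∀ x, Nᵀ *ᵥ Phi d ι a x = N'ᵀ *ᵥ Phi d ι a x) : N = N' := by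
  have hsqrt : 0 < √(d : ℝ) := Real.sqrt_pos.2 (Nat.cast_pos.2 hd)
  let k : MIdx d ι → ℝ := fun s => featureWeight d ι a s / ∏ i, √d ^ (s.1 i : ℕ)
  have hk : ∀ s, k s ≠ 0 := fun s => (div_pos (featureWeight_pos ha s) (by positivity)).ne'
  ext s r
  have hcol := eq_zero_of_sum_mul_prod_pow (fun s => (N s r - N' s r) * k s) fun x => by
    have hx := congrFun (h x) r
    simp only [mulVec, dotProduct, transpose_apply, Phi_eq_feature, feature, prod_div_distrib]
      at hx
    rw [← sub_eq_zero, ← sum_sub_distrib] at hx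
    rw [← hx]
    exact sum_congr rfl fun t _ => by simp only [k]; ring
  simpa [sub_eq_zero, hk s] using congrFun hcol s

end Independence

lemma sum_sq_mulVec_le_of_sum_abs_le {m n : Type*} [Fintype m] [Fintype n] (A : Matrix m n ℝ)
    {R₁ R₂ : ℝ} (hR₁ : 0 ≤ R₁) (hrow : ∀ i, ∑ j, |A i j| ≤ R₁) (hcol : ∀ j, ∑ i, |A i j| ≤ R₂)
    (u : n → ℝ) : ∑ i, (A *ᵥ u) i ^ 2 ≤ R₁ * R₂ * ∑ j, u j ^ 2 := by
  have hCS : ∀ i, (A *ᵥ u) i ^ 2 ≤ (∑ j, |A i j|) * ∑ j, |A i j| * u j ^ 2 := fun i =>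
    sum_sq_le_sum_mul_sum_of_sq_le_mul _ (fun _ _ => abs_nonneg _)
      (fun _ _ => by positivity) fun j _ => by rw [mul_pow, ← mul_assoc, ← sq, sq_abs]
  calc ∑ i, (A *ᵥ u) i ^ 2 ≤ ∑ i, R₁ * ∑ j, |A i j| * u j ^ 2 :=
        sum_le_sum fun i _ => (hCS i).trans <|
          mul_le_mul_of_nonneg_right (hrow i) (sum_nonneg fun _ _ => by positivity)
    _ = R₁ * ∑ j, (∑ i, |A i j|) * u j ^ 2 := by
        rw [← mul_sum, sum_comm]
        simp only [sum_mul]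
    _ ≤ R₁ * ∑ j, R₂ * u j ^ 2 := by
        gcongr with j
        exact hcol j
    _ = R₁ * R₂ * ∑ j, u j ^ 2 := by rw [← mul_sum, mul_assoc]

/-- The shape of the change of basis between the monomials `t ^ k` and polynomials `q k` with
`q 0 = 1` and `(q 1).eval 0 = 0`, in either direction. -/
structure IsCenteredLowerTriangular {n : ℕ} (c : Matrix (Fin (n + 1)) (Fin (n + 1)) ℝ) : Prop where
  isLowerTriangular : c.IsLowerTriangular
  apply_zero_zero : c 0 0 = 1
  apply_zero_of_val_eq_one : ∀ k : Fin (n + 1), (k : ℕ) = 1 → c k 0 = 0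

namespace IsCenteredLowerTriangular

variable {n : ℕ} {c : Matrix (Fin (n + 1)) (Fin (n + 1)) ℝ} {D : ℝ}

lemma sum_abs_row_le (j : Fin (n + 1)) : ∑ k, |c j k| ≤ ∑ j, ∑ k, |c j k| :=
  single_le_sum (f := fun j => ∑ k, |c j k|) (fun _ _ => sum_nonneg fun _ _ => abs_nonneg _)
    (mem_univ j)

lemma sum_abs_col_le (k : Fin (n + 1)) : ∑ j, |c j k| ≤ ∑ j, ∑ k, |c j k| :=
  sum_le_sum fun j _ => single_le_sum (fun k _ => abs_nonneg (c j k)) (mem_univ k)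

lemma one_le_sum_abs (hc : IsCenteredLowerTriangular c) : 1 ≤ ∑ j, ∑ k, |c j k| :=
  calc 1 = |c 0 0| := by rw [hc.apply_zero_zero, abs_one]
    _ ≤ ∑ k, |c 0 k| := single_le_sum (fun k _ => abs_nonneg (c 0 k)) (mem_univ 0)
    _ ≤ _ := sum_abs_row_le 0

lemma abs_mul_div_pow_le (hc : IsCenteredLowerTriangular c) (hD : 1 ≤ D) (j k : Fin (n + 1)) :
    |c j k| * (D ^ (k : ℕ) / D ^ (j : ℕ)) ≤ |c j k| := by
  rcases lt_or_ge j k with hjk | hkj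
  · simp [hc.isLowerTriangular (OrderDual.toDual_lt_toDual.2 hjk)]
  · exact mul_le_of_le_one_right (abs_nonneg _)
      (div_le_one_of_le₀ (pow_le_pow_right₀ hD hkj) (by positivity))

lemma sum_abs_mul_div_pow_le_pow (hc : IsCenteredLowerTriangular c) (hD : 1 ≤ D)
    (j : Fin (n + 1)) :
    ∑ k, |c j k| * (D ^ (k : ℕ) / D ^ (j : ℕ)) ≤ (∑ j, ∑ k, |c j k|) ^ (j : ℕ) := by
  refine (sum_le_sum fun k _ => hc.abs_mul_div_pow_le hD j k).trans ?_
  rcases Fin.eq_zero_or_eq_succ j with rfl | ⟨j, rfl⟩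
  · rw [sum_eq_single 0 (fun k _ hk => by
      rw [hc.isLowerTriangular (OrderDual.toDual_lt_toDual.2 (Fin.pos_iff_ne_zero.2 hk)),
        abs_zero]) (by simp)]
    simp [hc.apply_zero_zero]
  · exact (sum_abs_row_le _).trans (le_self_pow₀ hc.one_le_sum_abs (by simp))

lemma sum_abs_mul_div_pow_le_mul_pow (hc : IsCenteredLowerTriangular c) (hD : 1 ≤ D)
    (k : Fin (n + 1)) :
    ∑ j, |c j k| * (D ^ (k : ℕ) / D ^ (j : ℕ)) ≤
      (1 + (∑ j, ∑ k, |c j k|) / D ^ 2) * (∑ j, ∑ k, |c j k|) ^ (k : ℕ) := by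
  have hM := hc.one_le_sum_abs
  have hD0 : 0 < D := zero_lt_one.trans_le hD
  rcases Fin.eq_zero_or_eq_succ k with rfl | ⟨k, rfl⟩
  · have hterm (j : Fin (n + 1)) : |c j 0| * (D ^ ((0 : Fin (n + 1)) : ℕ) / D ^ (j : ℕ)) ≤
        (if j = 0 then 1 else 0) + |c j 0| / D ^ 2 := by
      rw [Fin.val_zero, pow_zero, ← div_eq_mul_one_div]
      rcases Fin.eq_zero_or_eq_succ j with rfl | ⟨j, rfl⟩
      · rw [if_pos rfl, hc.apply_zero_zero, abs_one, Fin.val_zero, pow_zero, div_one]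
        exact le_add_of_nonneg_right (by positivity)
      rw [if_neg (Fin.succ_ne_zero j), zero_add]
      rcases eq_or_ne (j : ℕ) 0 with hj | hj
      · rw [hc.apply_zero_of_val_eq_one j.succ (by simp [hj]), abs_zero, zero_div, zero_div]
      · exact div_le_div_of_nonneg_left (abs_nonneg _) (by positivity)
          (pow_le_pow_right₀ hD (by simp; omega))
    refine (sum_le_sum fun j _ => hterm j).trans ?_
    rw [sum_add_distrib, sum_ite_eq' univ (0 : Fin (n + 1)), if_pos (mem_univ _), ← sum_div,
      Fin.val_zero, pow_zero, mul_one]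
    gcongr 1 + ?_ / _
    exact sum_abs_col_le 0
  · refine (sum_le_sum fun j _ => hc.abs_mul_div_pow_le hD j _).trans ?_
    refine (sum_abs_col_le _).trans ((le_self_pow₀ (n := (k.succ : ℕ)) hM (by simp)).trans ?_)
    exact le_mul_of_one_le_left (by positivity) (le_add_of_nonneg_right (by positivity))

lemma inv (hc : IsCenteredLowerTriangular c) (hdet : IsUnit c.det) :
    IsCenteredLowerTriangular c⁻¹ := by
  have : Invertible c := c.invertibleOfIsUnitDet hdet
  have hlow : c⁻¹.IsLowerTriangular := blockTriangular_inv_of_blockTriangular hc.isLowerTriangular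
  have hmul (k : Fin (n + 1)) :
      (c⁻¹ * c) k 0 = (1 : Matrix (Fin (n + 1)) (Fin (n + 1)) ℝ) k 0 := by
    rw [nonsing_inv_mul c hdet]
  have above (k j : Fin (n + 1)) (h : k < j) : c⁻¹ k j = 0 :=
    hlow (OrderDual.toDual_lt_toDual.2 h)
  refine ⟨hlow, ?_, fun k hk => ?_⟩
  · have h00 := hmul 0
    rw [mul_apply, sum_eq_single 0 (fun j _ hj => by rw [above 0 j (Fin.pos_iff_ne_zero.2 hj),
      zero_mul]) (by simp), hc.apply_zero_zero, mul_one] at h00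
    simpa using h00
  · have hk0 : k ≠ 0 := fun h => by simp [h] at hk
    have hk0' := hmul k
    rw [mul_apply, sum_eq_single 0 (fun j _ hj => ?_) (by simp), hc.apply_zero_zero, mul_one,
      one_apply_ne hk0] at hk0'
    · exact hk0'
    rcases eq_or_ne j k with rfl | hjk
    · rw [hc.apply_zero_of_val_eq_one j hk, mul_zero]
    · have hj0 : 0 < (j : ℕ) := Fin.pos_iff_ne_zero.2 hj
      have hjk' : (j : ℕ) ≠ k := Fin.val_ne_of_ne hjk
      rw [above k j (Fin.lt_def.2 (by omega)), zero_mul]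

end IsCenteredLowerTriangular

section TensorBound

variable {d ι : ℕ} {a : ℕ → ℝ} {c : Matrix (Fin (ι + 1)) (Fin (ι + 1)) ℝ} {W : ℝ}

lemma abs_tensorCoeffMatrix_le (ha : ∀ i ≤ ι, 0 < a i)
    (hW : ∀ r s, featureWeight d ι a r / featureWeight d ι a s ≤ W) (s r : MIdx d ι) :
    |tensorCoeffMatrix d ι a c s r| ≤
      W * ∏ i, |c (r.1 i) (s.1 i)| * (√d ^ (s.1 i : ℕ) / √d ^ (r.1 i : ℕ)) := by
  have hw := featureWeight_pos ha (d := d)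
  rw [tensorCoeffMatrix, abs_mul, abs_prod, abs_of_pos (div_pos (hw r) (hw s))]
  refine mul_le_mul (hW r s) (le_of_eq (prod_congr rfl fun i _ => ?_)) (by positivity)
    ((div_pos (hw r) (hw s)).le.trans (hW r s))
  rw [abs_mul, abs_of_nonneg (by positivity : (0 : ℝ) ≤ √d ^ (s.1 i : ℕ) / √d ^ (r.1 i : ℕ))]

lemma sum_MIdx_prod_le (G : Fin d → Fin (ι + 1) → ℝ) (hG : ∀ i j, 0 ≤ G i j) :
    ∑ r : MIdx d ι, ∏ i, G i (r.1 i) ≤ ∏ i, ∑ j, G i j := by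
  classical
  rw [Fintype.prod_sum]
  exact sum_MIdx_le_sum (F := fun r => ∏ i, G i (r i)) fun r => prod_nonneg fun i _ => hG i _

lemma one_add_div_pow_le_exp {x : ℝ} (hx : 0 ≤ x) (n : ℕ) : (1 + x / n) ^ n ≤ Real.exp x := by
  rcases n.eq_zero_or_pos with rfl | hn
  · simpa using Real.one_le_exp hx
  calc (1 + x / n) ^ n ≤ Real.exp (x / n) ^ n := by
        gcongr
        rw [add_comm]
        exact Real.add_one_le_exp _
    _ = Real.exp x := by rw [← Real.exp_nat_mul, mul_div_cancel₀ _ (by positivity)]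

variable (hd : 0 < d) (ha : ∀ i ≤ ι, 0 < a i) (hc : IsCenteredLowerTriangular c)
  (hW : ∀ r s, featureWeight d ι a r / featureWeight d ι a s ≤ W)
include hd ha hc hW

lemma sum_abs_tensorCoeffMatrix_row_le (s : MIdx d ι) :
    ∑ r, |tensorCoeffMatrix d ι a c s r| ≤
      W * (Real.exp (∑ j, ∑ k, |c j k|) * (∑ j, ∑ k, |c j k|) ^ ι) := by
  set M := ∑ j, ∑ k, |c j k|
  have hD : 1 ≤ √(d : ℝ) := Real.one_le_sqrt.2 (Nat.one_le_cast.2 hd)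
  have hW0 : 0 ≤ W := (div_pos (featureWeight_pos ha s) (featureWeight_pos ha s)).le.trans (hW s s)
  calc ∑ r, |tensorCoeffMatrix d ι a c s r|
      ≤ ∑ r : MIdx d ι, W * ∏ i, |c (r.1 i) (s.1 i)| * (√d ^ (s.1 i : ℕ) / √d ^ (r.1 i : ℕ)) :=
        sum_le_sum fun r _ => abs_tensorCoeffMatrix_le ha hW s r
    _ ≤ W * ∏ i, ∑ j, |c j (s.1 i)| * (√d ^ (s.1 i : ℕ) / √d ^ (j : ℕ)) := by
        rw [← mul_sum]
        exact mul_le_mul_of_nonneg_left (sum_MIdx_prod_le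
          (fun i j => |c j (s.1 i)| * (√d ^ (s.1 i : ℕ) / √d ^ (j : ℕ))) fun _ _ => by positivity)
          hW0
    _ ≤ W * ∏ i, (1 + M / d) * M ^ (s.1 i : ℕ) := by
        refine mul_le_mul_of_nonneg_left (prod_le_prod (fun i _ => sum_nonneg fun _ _ => by
          positivity) fun i _ => ?_) hW0
        simpa [Real.sq_sqrt d.cast_nonneg] using hc.sum_abs_mul_div_pow_le_mul_pow hD (s.1 i)
    _ ≤ W * (Real.exp M * M ^ ι) := by
        have hM := hc.one_le_sum_abs
        rw [prod_mul_distrib, prod_const, card_univ, Fintype.card_fin, prod_pow_eq_pow_sum]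
        gcongr
        · exact one_add_div_pow_le_exp (by positivity) d
        · exact s.2

lemma sum_abs_tensorCoeffMatrix_col_le (r : MIdx d ι) :
    ∑ s, |tensorCoeffMatrix d ι a c s r| ≤
      W * (Real.exp (∑ j, ∑ k, |c j k|) * (∑ j, ∑ k, |c j k|) ^ ι) := by
  set M := ∑ j, ∑ k, |c j k|
  have hD : 1 ≤ √(d : ℝ) := Real.one_le_sqrt.2 (Nat.one_le_cast.2 hd)
  have hW0 : 0 ≤ W := (div_pos (featureWeight_pos ha r) (featureWeight_pos ha r)).le.trans (hW r r)
  have hM := hc.one_le_sum_abs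
  calc ∑ s, |tensorCoeffMatrix d ι a c s r|
      ≤ ∑ s : MIdx d ι, W * ∏ i, |c (r.1 i) (s.1 i)| * (√d ^ (s.1 i : ℕ) / √d ^ (r.1 i : ℕ)) :=
        sum_le_sum fun s _ => abs_tensorCoeffMatrix_le ha hW s r
    _ ≤ W * ∏ i, ∑ k, |c (r.1 i) k| * (√d ^ (k : ℕ) / √d ^ (r.1 i : ℕ)) := by
        rw [← mul_sum]
        exact mul_le_mul_of_nonneg_left (sum_MIdx_prod_le
          (fun i k => |c (r.1 i) k| * (√d ^ (k : ℕ) / √d ^ (r.1 i : ℕ))) fun _ _ => by positivity)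
          hW0
    _ ≤ W * ∏ i, M ^ (r.1 i : ℕ) :=
        mul_le_mul_of_nonneg_left (prod_le_prod (fun i _ => sum_nonneg fun _ _ => by positivity)
          fun i _ => hc.sum_abs_mul_div_pow_le_pow hD (r.1 i)) hW0
    _ ≤ W * (Real.exp M * M ^ ι) := by
        rw [prod_pow_eq_pow_sum]
        gcongr
        exact (pow_le_pow_right₀ hM r.2).trans
          (le_mul_of_one_le_left (by positivity) (Real.one_le_exp (by positivity)))

end TensorBound

lemma exists_sqrt_sum_sq_tensorCoeffMatrix_mulVec_le {ι : ℕ} {a : ℕ → ℝ} (ha : ∀ i ≤ ι, 0 < a i)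
    {c : Matrix (Fin (ι + 1)) (Fin (ι + 1)) ℝ} (hc : IsCenteredLowerTriangular c) :
    ∃ C > 0, ∀ d, 0 < d → ∀ u : MIdx d ι → ℝ,
      √(∑ s, (tensorCoeffMatrix d ι a c *ᵥ u) s ^ 2) ≤ C * √(∑ s, u s ^ 2) := by
  set W := √(ι.factorial * (∑ i ∈ range (ι + 1), a i) * ∑ i ∈ range (ι + 1), (a i)⁻¹)
  set M := ∑ j, ∑ k, |c j k|
  have hW : 1 ≤ W := by
    let r : MIdx 0 ι := ⟨fun _ => 0, by simp⟩
    have := featureWeight_div_le ha r r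
    rwa [div_self (featureWeight_pos ha r).ne'] at this
  have hC : 0 < W * (Real.exp M * M ^ ι) := by
    have := hc.one_le_sum_abs
    positivity
  refine ⟨_, hC, fun d hd u => ?_⟩
  rw [← Real.sqrt_mul_self hC.le, ← Real.sqrt_mul (mul_self_nonneg _)]
  exact Real.sqrt_le_sqrt (sum_sq_mulVec_le_of_sum_abs_le _ hC.le
    (sum_abs_tensorCoeffMatrix_row_le hd ha hc (featureWeight_div_le ha))
    (sum_abs_tensorCoeffMatrix_col_le hd ha hc (featureWeight_div_le ha)) u)

lemma Polynomial.coeff_zero_eq_zero_of_integral_eq_zero {P : Measure ℝ} [IsProbabilityMeasure P]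
    (hmean : ∫ z, z ∂P = 0) (hint : Integrable (fun z => z) P) {p : Polynomial ℝ}
    (hp : p.natDegree ≤ 1) (horth : ∫ z, p.eval z ∂P = 0) : p.coeff 0 = 0 := by
  rw [Polynomial.eq_X_add_C_of_natDegree_le_one hp] at horth
  simp only [Polynomial.eval_add, Polynomial.eval_mul, Polynomial.eval_C, Polynomial.eval_X]
    at horth
  rw [integral_add (hint.const_mul _) (integrable_const _), integral_const_mul, hmean,
    integral_const] at horth
  simpa using horth

noncomputable def coeffMatrix (q : ℕ → Polynomial ℝ) (ι : ℕ) :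
    Matrix (Fin (ι + 1)) (Fin (ι + 1)) ℝ := fun k j => (q k).coeff j

section CoeffMatrix

variable {q : ℕ → Polynomial ℝ} {ι : ℕ}

lemma eval_eq_coeffMatrix_mulVec (hqdeg : ∀ k, (q k).natDegree = k) (t : ℝ) :
    (fun k : Fin (ι + 1) => (q k).eval t) = coeffMatrix q ι *ᵥ fun j => t ^ (j : ℕ) := by
  ext k
  rw [Polynomial.eval_eq_sum_range' (n := ι + 1) (by rw [hqdeg]; exact k.2),
    ← Fin.sum_univ_eq_sum_range (fun j => (q k).coeff j * t ^ j)]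
  rfl

lemma isLowerTriangular_coeffMatrix (hqdeg : ∀ k, (q k).natDegree = k) :
    (coeffMatrix q ι).IsLowerTriangular := fun _ _ h =>
  Polynomial.coeff_eq_zero_of_natDegree_lt (by rw [hqdeg]; exact h)

lemma isUnit_det_coeffMatrix (hqdeg : ∀ k, (q k).natDegree = k)
    (hqlead : ∀ k, 0 < (q k).leadingCoeff) : IsUnit (coeffMatrix q ι).det := by
  rw [det_of_isLowerTriangular _ (isLowerTriangular_coeffMatrix hqdeg), isUnit_iff_ne_zero,
    prod_ne_zero_iff]
  intro k _
  have := (hqlead k).ne'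
  rwa [Polynomial.leadingCoeff, hqdeg] at this

lemma isCenteredLowerTriangular_coeffMatrix (hq0 : q 0 = 1) (hqdeg : ∀ k, (q k).natDegree = k)
    (hq1 : (q 1).coeff 0 = 0) : IsCenteredLowerTriangular (coeffMatrix q ι) :=
  ⟨isLowerTriangular_coeffMatrix hqdeg, by simp [coeffMatrix, hq0],
    fun k hk => by simp [coeffMatrix, hk, hq1]⟩

end CoeffMatrix

lemma eq_tensorCoeffMatrix_of_Phi_eq_transpose_mulVec_Psi {d ι : ℕ} (hd : 0 < d) {a : ℕ → ℝ}
    (ha : ∀ i ≤ ι, 0 < a i) {q : ℕ → Polynomial ℝ} (hqdeg : ∀ k, (q k).natDegree = k)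
    (hqlead : ∀ k, 0 < (q k).leadingCoeff) {Λ : Matrix (MIdx d ι) (MIdx d ι) ℝ}
    (hΛ : ∀ x, Phi d ι a x = Λᵀ *ᵥ Psi d ι q a x) :
    Λ = tensorCoeffMatrix d ι a (coeffMatrix q ι)⁻¹ ∧
      Λ⁻¹ = tensorCoeffMatrix d ι a (coeffMatrix q ι) := by
  set B := coeffMatrix q ι
  have hdet : IsUnit B.det := isUnit_det_coeffMatrix hqdeg hqlead
  have : Invertible B := B.invertibleOfIsUnitDet hdet
  have hpow (t : ℝ) : (fun k : Fin (ι + 1) => t ^ (k : ℕ)) = B⁻¹ *ᵥ fun j => (q j).eval t := by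
    rw [eval_eq_coeffMatrix_mulVec hqdeg, mulVec_mulVec, nonsing_inv_mul _ hdet, one_mulVec]
  have hPsi (x : Fin d → ℝ) : Psi d ι q a x = (tensorCoeffMatrix d ι a B)ᵀ *ᵥ Phi d ι a x := by
    rw [Phi_eq_feature, Psi_eq_feature]
    exact feature_eq_transpose_mulVec hd ha (isLowerTriangular_coeffMatrix hqdeg)
      (eval_eq_coeffMatrix_mulVec hqdeg) x
  have hright (N : Matrix (MIdx d ι) (MIdx d ι) ℝ) (hN : ∀ x, Phi d ι a x = Nᵀ *ᵥ Psi d ι q a x) :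
      tensorCoeffMatrix d ι a B * N = 1 :=
    eq_of_transpose_mulVec_Phi_eq hd ha fun x => by
      rw [transpose_mul, ← mulVec_mulVec, ← hPsi, ← hN, transpose_one, one_mulVec]
  refine ⟨(inv_eq_right_inv (hright Λ hΛ)).symm.trans <| inv_eq_right_inv <| hright _ fun x => ?_,
    inv_eq_left_inv (hright Λ hΛ)⟩
  rw [Phi_eq_feature, Psi_eq_feature]
  exact feature_eq_transpose_mulVec hd ha
    (blockTriangular_inv_of_blockTriangular (isLowerTriangular_coeffMatrix hqdeg)) hpow x

theorem statement_14_general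
    (P : Measure ℝ) [IsProbabilityMeasure P]
    (hmean : ∫ z, z ∂P = 0)
    (hmom : ∀ m : ℕ, Integrable (fun z => z ^ m) P)
    (q : ℕ → Polynomial ℝ)
    (hq0 : q 0 = 1)
    (hqdeg : ∀ k, (q k).natDegree = k)
    (hqlead : ∀ k, 0 < (q k).leadingCoeff)
    (hqorth : ∀ j k, (∫ z, (q j).eval z * (q k).eval z ∂P) = if j = k then 1 else 0)
    (ι : ℕ) (a : ℕ → ℝ) (hapos : ∀ i ≤ ι, 0 < a i) :
    ∃ C > 0, ∀ (d : ℕ), 0 < d → ∀ Λ : Matrix (MIdx d ι) (MIdx d ι) ℝ,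
      IsUnit Λ.det →
      (∀ x : Fin d → ℝ, Phi d ι a x = (Matrix.transpose Λ).mulVec (Psi d ι q a x)) →
      (∀ u : MIdx d ι → ℝ,
          Real.sqrt (∑ s, Λ.mulVec u s ^ 2) ≤ C * Real.sqrt (∑ s, u s ^ 2)) ∧
        (∀ u : MIdx d ι → ℝ,
          Real.sqrt (∑ s, Λ⁻¹.mulVec u s ^ 2) ≤ C * Real.sqrt (∑ s, u s ^ 2)) := by
  have hq1 : (q 1).coeff 0 = 0 :=
    Polynomial.coeff_zero_eq_zero_of_integral_eq_zero hmean (by simpa using hmom 1)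
      (hqdeg 1).le (by simpa [hq0] using hqorth 1 0)
  have hB : IsCenteredLowerTriangular (coeffMatrix q ι) :=
    isCenteredLowerTriangular_coeffMatrix hq0 hqdeg hq1
  obtain ⟨Cb, -, hb⟩ := exists_sqrt_sum_sq_tensorCoeffMatrix_mulVec_le hapos hB
  obtain ⟨Cm, hCm, hm⟩ := exists_sqrt_sum_sq_tensorCoeffMatrix_mulVec_le hapos
    (hB.inv (isUnit_det_coeffMatrix hqdeg hqlead))
  refine ⟨max Cm Cb, lt_max_of_lt_left hCm, fun d hd Λ _ hΛ => ?_⟩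
  obtain ⟨hΛm, hΛb⟩ := eq_tensorCoeffMatrix_of_Phi_eq_transpose_mulVec_Psi hd hapos hqdeg hqlead hΛ
  refine ⟨fun u => ?_, fun u => ?_⟩
  · rw [hΛm]
    exact (hm d hd u).trans (mul_le_mul_of_nonneg_right (le_max_left _ _) (Real.sqrt_nonneg _))
  · rw [hΛb]
    exact (hb d hd u).trans (mul_le_mul_of_nonneg_right (le_max_right _ _) (Real.sqrt_nonneg _))

/-- boundedness of the change of basis. If `α_0, …, α_ι > 0` and `P`
satisfies the coordinate-distribution assumption with all moments finite, then the invertible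
change-of-basis matrix `Λ` with `Φ(x) = Λᵀ Ψ(x)` satisfies `‖Λ‖_op ≤ C(ι)` and
`‖Λ⁻¹‖_op ≤ C(ι)` for a constant `C(ι)` independent of the dimension `d`. -/
theorem statement_14
    (P : Measure ℝ) [IsProbabilityMeasure P]
    (hmean : ∫ z, z ∂P = 0)
    (ν : ℝ) (hν : 1 < ν)
    (htail : ∃ Ct > 0, ∀ t : ℝ, 0 ≤ t →
        P {z | t ≤ |z|} ≤ ENNReal.ofReal (Ct * (1 + t) ^ (-ν)))
    (hsupp : ∀ S : Finset ℝ, P (S : Set ℝ) < 1)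
    (hmom : ∀ m : ℕ, Integrable (fun z => z ^ m) P)
    (q : ℕ → Polynomial ℝ)
    (hq0 : q 0 = 1)
    (hqdeg : ∀ k, (q k).natDegree = k)
    (hqlead : ∀ k, 0 < (q k).leadingCoeff)
    (hqorth : ∀ j k, (∫ z, (q j).eval z * (q k).eval z ∂P) = if j = k then 1 else 0)
    (ι : ℕ) (hι : 1 ≤ ι) (a : ℕ → ℝ) (hapos : ∀ i ≤ ι, 0 < a i) :
    ∃ C > 0, ∀ (d : ℕ), 0 < d → ∀ Λ : Matrix (MIdx d ι) (MIdx d ι) ℝ,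
      IsUnit Λ.det →
      (∀ x : Fin d → ℝ, Phi d ι a x = (Matrix.transpose Λ).mulVec (Psi d ι q a x)) →
      (∀ u : MIdx d ι → ℝ,
          Real.sqrt (∑ s, Λ.mulVec u s ^ 2) ≤ C * Real.sqrt (∑ s, u s ^ 2)) ∧
        (∀ u : MIdx d ι → ℝ,
          Real.sqrt (∑ s, Λ⁻¹.mulVec u s ^ 2) ≤ C * Real.sqrt (∑ s, u s ^ 2)) :=
  statement_14_general P hmean hmom q hq0 hqdeg hqlead hqorth ι a hapos
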